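/- arXiv:funct-an/9411001 — 3 statements merged into one kernel-verified Lean document; each statement's English description precedes it below -/
import Mathlib

section
/- Intertwining property: Let ε > 0, let P0(t) (t ∈ [0,1]) be a strongly C¹ family of bounded projections (P0(t)² = P0(t)) on H, and set K0(t) := i[P0'(t), P0(t)]. Let G(t) be a family of self-adjoint operators with common dense domain D' such that P0(t) maps D' into D' and G(t)(P0(t)φ) = P0(t)(G(t)φ) for every φ ∈ D' and every t. Let V(t) be unitary operators with V(0) = I such that V(t) and V(t)⁻¹ map D' into D' and, for every φ ∈ D', the map t ↦ V(t)φ is differentiable with iε(d/dt)(V(t)φ) = G(t)(V(t)φ) + εK0(t)V(t)φ. Then V(t)P0(0) = P0(t)V(t) for all t ∈ [0,1]. -/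
/-!
For `φ ∈ D'`, both `t ↦ V(t) P0(0) φ` and `t ↦ P0(t) V(t) φ` solve `iε u' = G u + ε K0 u`.
For the second one, differentiating `P0² = P0` gives `P0' = P0' P0 + P0 P0'`, hence
`[K0, P0] = i P0'`, and this commutator exactly absorbs the term `iε P0' u` produced by the
product rule, while `G` commutes with `P0`. The difference `u` of the two solutions vanishes at
`t = 0`. Since `G` is symmetric, `⟪u, G u⟫` is real, so `d/dt ‖u‖² = 2 Im ⟪u, K0 u⟫ ≤ 2 C ‖u‖²`
with `C` a uniform bound on `‖K0‖` (Banach–Steinhaus), and Grönwall forces `u = 0`.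
Density of `D'` finishes the proof.
-/

open Set Filter Topology
open scoped InnerProductSpace

theorem IsCompact.exists_forall_opNorm_le {X 𝕜 E F : Type*} [TopologicalSpace X]
    [NontriviallyNormedField 𝕜] [NormedAddCommGroup E] [NormedSpace 𝕜 E] [CompleteSpace E]
    [NormedAddCommGroup F] [NormedSpace 𝕜 F] {s : Set X} (hs : IsCompact s)
    {A : X → E →L[𝕜] F} (hA : ∀ x, ContinuousOn (fun t => A t x) s) :
    ∃ C, ∀ t ∈ s, ‖A t‖ ≤ C := by
  obtain ⟨C, hC⟩ := banach_steinhaus (g := fun t : s => A t) fun x => by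
    obtain ⟨C, hC⟩ := hs.exists_bound_of_continuousOn (hA x)
    exact ⟨C, fun t => hC t t.2⟩
  exact ⟨C, fun t ht => hC ⟨t, ht⟩⟩

theorem IsIdempotentElem.lie_lie_of_eq_mul_add_mul {R : Type*} [Ring R] {p d : R}
    (hp : IsIdempotentElem p) (hd : d = d * p + p * d) : ⁅⁅d, p⁆, p⁆ = d := by
  have hpdp : p * d * p = 0 := by
    have h : p * d * p = p * d * p + p * d * p := calc
      p * d * p = p * (d * p + p * d) * p := by rw [← hd]
      _ = p * d * (p * p) + p * p * d * p := by noncomm_ring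
      _ = p * d * p + p * d * p := by rw [hp.eq]
    simpa using h
  calc ⁅⁅d, p⁆, p⁆ = d * (p * p) + p * p * d - 2 • (p * d * p) := by
        simp only [Ring.lie_def]; noncomm_ring
    _ = d := by rw [hp.eq, hpdp, smul_zero, sub_zero, ← hd]

theorem norm_lie_le {R : Type*} [NormedRing R] (a b : R) : ‖⁅a, b⁆‖ ≤ 2 * ‖a‖ * ‖b‖ :=
  calc ‖⁅a, b⁆‖ ≤ ‖a‖ * ‖b‖ + ‖b‖ * ‖a‖ :=
        (Ring.lie_def a b ▸ norm_sub_le _ _).trans (add_le_add (norm_mul_le _ _) (norm_mul_le _ _))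
    _ = 2 * ‖a‖ * ‖b‖ := by ring

section StrongDerivative

variable {E F : Type*} [NormedAddCommGroup E] [NormedSpace ℂ E]
  [NormedAddCommGroup F] [NormedSpace ℂ F]

theorem HasDerivWithinAt.clm_apply_of_bounded {A : ℝ → E →L[ℂ] F} {g : ℝ → E} {g' : E} {a : F}
    {s : Set ℝ} {t M : ℝ} (hg : HasDerivWithinAt g g' s t)
    (hA : HasDerivWithinAt (fun u => A u (g t)) a s t)
    (hAc : ContinuousWithinAt (fun u => A u g') s t) (hM : ∀ u ∈ s, ‖A u‖ ≤ M) :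
    HasDerivWithinAt (fun u => A u (g u)) (a + A t g') s t := by
  rw [hasDerivWithinAt_iff_tendsto_slope] at hA hg ⊢
  have hslope : ∀ u ∈ s \ {t}, slope (fun u => A u (g u)) t u
      = slope (fun u => A u (g t)) t u + A u (slope g t u) := by
    intro u _
    simp only [slope_def_module, ContinuousLinearMap.map_smul_of_tower, map_sub, ← smul_add]
    abel
  have hrem : Tendsto (fun u => A u (slope g t u - g')) (𝓝[s \ {t}] t) (𝓝 0) := by
    refine squeeze_zero_norm' ?_ ((hg.sub_const g').norm.const_mul M |>.trans_eq (by simp))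
    filter_upwards [self_mem_nhdsWithin] with u hu
    exact (A u).le_of_opNorm_le (hM u hu.1) _
  have hmain : Tendsto (fun u => A u (slope g t u)) (𝓝[s \ {t}] t) (𝓝 (A t g')) := by
    have h := hrem.add (hAc.tendsto.mono_left (nhdsWithin_mono _ sdiff_subset))
    rw [zero_add] at h
    exact h.congr fun u => by simp
  refine (hA.add hmain).congr' ?_
  filter_upwards [self_mem_nhdsWithin] with u hu
  exact (hslope u hu).symm

theorem eq_mul_add_mul_of_hasDerivWithinAt_of_isIdempotentElem {P : ℝ → E →L[ℂ] E}
    {P' : E →L[ℂ] E} {s : Set ℝ} {t M : ℝ} (hs : UniqueDiffWithinAt ℝ s t) (ht : t ∈ s)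
    (hP : ∀ u ∈ s, IsIdempotentElem (P u)) (hM : ∀ u ∈ s, ‖P u‖ ≤ M)
    (hderiv : ∀ x, HasDerivWithinAt (fun u => P u x) (P' x) s t) :
    P' = P' * P t + P t * P' := by
  ext x
  have hsq : HasDerivWithinAt (fun u => P u (P u x)) (P' (P t x) + P t (P' x)) s t :=
    (hderiv x).clm_apply_of_bounded (hderiv _) (hderiv _).continuousWithinAt hM
  have hsq' : HasDerivWithinAt (fun u => P u x) (P' (P t x) + P t (P' x)) s t :=
    hsq.congr (fun u hu => congrArg (· x) (hP u hu).eq.symm) (congrArg (· x) (hP t ht).eq.symm)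
  exact hs.eq_deriv _ (hderiv x) hsq'

end StrongDerivative

theorem LinearPMap.IsFormalAdjoint.self_of_isSelfAdjoint {E : Type*} [NormedAddCommGroup E]
    [InnerProductSpace ℂ E] [CompleteSpace E] {T : E →ₗ.[ℂ] E} (hT : Dense (T.domain : Set E))
    (h : IsSelfAdjoint T) : T.IsFormalAdjoint T := by
  simpa only [LinearPMap.isSelfAdjoint_def.mp h] using LinearPMap.adjoint_isFormalAdjoint hT

section Energy

variable {H : Type*} [NormedAddCommGroup H] [InnerProductSpace ℂ H]

theorem eq_zero_of_re_inner_deriv_le {u u' : ℝ → H} {a b C : ℝ}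
    (hu : ∀ t ∈ Icc a b, HasDerivWithinAt u (u' t) (Icc a b) t)
    (hbound : ∀ t ∈ Ico a b, (⟪u t, u' t⟫_ℂ).re ≤ C * ‖u t‖ ^ 2) (ha : u a = 0) :
    ∀ t ∈ Icc a b, u t = 0 := by
  have hderiv : ∀ t ∈ Icc a b,
      HasDerivWithinAt (fun t => ‖u t‖ ^ 2) (2 * (⟪u t, u' t⟫_ℂ).re) (Icc a b) t := by
    intro t ht
    have h := Complex.reCLM.hasFDerivAt.comp_hasDerivWithinAt t ((hu t ht).inner ℂ (hu t ht))
    refine (h.congr (fun v _ => ?_) ?_).congr_deriv ?_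
    · simp only [Function.comp_apply, Complex.reCLM_apply, inner_self_eq_norm_sq_to_K]; norm_cast
    · simp only [Function.comp_apply, Complex.reCLM_apply, inner_self_eq_norm_sq_to_K]; norm_cast
    · rw [Complex.reCLM_apply, Complex.add_re, ← inner_conj_symm (u t) (u' t), Complex.conj_re]
      ring
  have hle := le_gronwallBound_of_liminf_deriv_right_le (δ := 0) (K := 2 * C) (ε := 0)
    (fun t ht => (hderiv t ht).continuousWithinAt)
    (fun t ht _ hr => ((hderiv t (Ico_subset_Icc_self ht)).mono_of_mem_nhdsWithin
      (Icc_mem_nhdsGE_of_mem ht)).liminf_right_slope_le hr)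
    (by simp [ha]) (fun t ht => by linarith [hbound t ht])
  intro t ht
  have h0 := hle t ht
  rw [gronwallBound_ε0_δ0] at h0
  exact norm_eq_zero.mp (pow_eq_zero_iff two_ne_zero |>.mp (le_antisymm h0 (by positivity)))

theorem re_inner_eq_im_inner_of_smul_eq {ε : ℝ} (hε : ε ≠ 0) {x w g k : H}
    (hg : (⟪x, g⟫_ℂ).im = 0) (hw : (Complex.I * ε) • w = g + (ε : ℂ) • k) :
    (⟪x, w⟫_ℂ).re = (⟪x, k⟫_ℂ).im := by
  have hIε : Complex.I * ε ≠ 0 := mul_ne_zero Complex.I_ne_zero (by exact_mod_cast hε)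
  rw [← inv_smul_smul₀ hIε w, hw, inner_smul_right, inner_add_right, inner_smul_right,
    mul_inv, Complex.inv_I]
  simp [Complex.mul_re, Complex.mul_im, hg]
  field_simp

end Energy

namespace Schrodinger

variable {H : Type*} [NormedAddCommGroup H] [InnerProductSpace ℂ H] {D : Submodule ℂ H}

def IsSolution (ε : ℝ) (G : ℝ → D →ₗ[ℂ] H) (K : ℝ → H →L[ℂ] H) (s : Set ℝ) (u : ℝ → H) :
    Prop :=
  ∀ t ∈ s, ∃ w, HasDerivWithinAt u w s t ∧
    ∃ hu : u t ∈ D, (Complex.I * ε) • w = G t ⟨u t, hu⟩ + (ε : ℂ) • K t (u t)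

variable {ε : ℝ} {G : ℝ → D →ₗ[ℂ] H} {K : ℝ → H →L[ℂ] H} {s : Set ℝ} {u v : ℝ → H}

theorem IsSolution.sub (hu : IsSolution ε G K s u) (hv : IsSolution ε G K s v) :
    IsSolution ε G K s (u - v) := by
  intro t ht
  obtain ⟨w, hw, hut, hweq⟩ := hu t ht
  obtain ⟨w', hw', hvt, hweq'⟩ := hv t ht
  refine ⟨w - w', hw.sub hw', D.sub_mem hut hvt, ?_⟩
  have hG : G t ⟨u t - v t, D.sub_mem hut hvt⟩ = G t ⟨u t, hut⟩ - G t ⟨v t, hvt⟩ := by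
    rw [← map_sub]; rfl
  simp only [Pi.sub_apply, hG, map_sub, smul_sub, hweq, hweq']
  abel

theorem IsSolution.clm_apply {P P' : ℝ → H →L[ℂ] H} {M : ℝ} (hu : IsSolution ε G K s u)
    (hP : ∀ x, ∀ t ∈ s, HasDerivWithinAt (fun t => P t x) (P' t x) s t)
    (hM : ∀ t ∈ s, ‖P t‖ ≤ M)
    (hPD : ∀ t, t ∈ s → ∀ φ : D, P t (φ : H) ∈ D)
    (hGP : ∀ t, ∀ ht : t ∈ s, ∀ φ : D, G t ⟨P t (φ : H), hPD t ht φ⟩ = P t (G t φ))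
    (hKP : ∀ t ∈ s, ⁅K t, P t⁆ = Complex.I • P' t) :
    IsSolution ε G K s (fun t => P t (u t)) := by
  intro t ht
  obtain ⟨w, hw, hut, hweq⟩ := hu t ht
  refine ⟨P' t (u t) + P t w, hw.clm_apply_of_bounded (hP _ t ht)
    (hP w t ht |>.continuousWithinAt) hM, hPD t ht ⟨u t, hut⟩, ?_⟩
  have hcomm : Complex.I • P' t (u t) = K t (P t (u t)) - P t (K t (u t)) := by
    rw [← smul_apply, ← hKP t ht, Ring.lie_def]; rfl
  calc (Complex.I * ε) • (P' t (u t) + P t w)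
      = (ε : ℂ) • (Complex.I • P' t (u t)) + P t ((Complex.I * ε) • w) := by
        rw [map_smul, smul_add, mul_comm, mul_smul]
    _ = _ := by
        rw [hcomm, hweq, map_add, map_smul, hGP t ht ⟨u t, hut⟩]
        module

theorem IsSolution.eq_zero {a b C : ℝ} (hε : ε ≠ 0) (hu : IsSolution ε G K (Icc a b) u)
    (hG : ∀ t ∈ Icc a b, (LinearPMap.mk D (G t)).IsFormalAdjoint (LinearPMap.mk D (G t)))
    (hK : ∀ t ∈ Icc a b, ‖K t‖ ≤ C) (ha : u a = 0) :
    ∀ t ∈ Icc a b, u t = 0 := by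
  choose! u' hu' hmem heq using hu
  refine eq_zero_of_re_inner_deriv_le (C := C) hu' (fun t ht => ?_) ha
  have ht' := Ico_subset_Icc_self ht
  have hreal : (⟪u t, G t ⟨u t, hmem t ht'⟩⟫_ℂ).im = 0 := by
    rw [← Complex.conj_eq_iff_im, inner_conj_symm]
    exact hG t ht' ⟨u t, hmem t ht'⟩ ⟨u t, hmem t ht'⟩
  calc (⟪u t, u' t⟫_ℂ).re = (⟪u t, K t (u t)⟫_ℂ).im :=
        re_inner_eq_im_inner_of_smul_eq hε hreal (heq t ht')
    _ ≤ ‖u t‖ * (C * ‖u t‖) :=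
        (Complex.im_le_norm _).trans <| (norm_inner_le_norm _ _).trans <|
          mul_le_mul_of_nonneg_left ((K t).le_of_opNorm_le (hK t ht') _) (norm_nonneg _)
    _ = C * ‖u t‖ ^ 2 := by ring

end Schrodinger

theorem intertwining_property_general
    {H : Type*} [NormedAddCommGroup H] [InnerProductSpace ℂ H] [CompleteSpace H]
    (ε : ℝ) (hε : 0 < ε)
    (P0 P0' : ℝ → H →L[ℂ] H)
    (hP0idem : ∀ t ∈ Set.Icc (0:ℝ) 1, P0 t ∘L P0 t = P0 t)
    (hP0deriv : ∀ x : H, ∀ t ∈ Set.Icc (0:ℝ) 1,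
      HasDerivWithinAt (fun s => P0 s x) (P0' t x) (Set.Icc (0:ℝ) 1) t)
    (hP0'cont : ∀ x : H, ContinuousOn (fun t => P0' t x) (Set.Icc (0:ℝ) 1))
    (K0 : ℝ → H →L[ℂ] H)
    (hK0 : ∀ t, K0 t = Complex.I • (P0' t ∘L P0 t - P0 t ∘L P0' t))
    (D' : Submodule ℂ H) (hD' : Dense (D' : Set H))
    (G : ℝ → D' →ₗ[ℂ] H)
    (hGsa : ∀ t ∈ Set.Icc (0:ℝ) 1, IsSelfAdjoint (LinearPMap.mk D' (G t)))
    (hP0D' : ∀ t, t ∈ Set.Icc (0:ℝ) 1 → ∀ φ : D', P0 t (φ : H) ∈ D')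
    (hGcomm : ∀ t, ∀ ht : t ∈ Set.Icc (0:ℝ) 1, ∀ φ : D',
      G t ⟨P0 t (φ : H), hP0D' t ht φ⟩ = P0 t (G t φ))
    (V : ℝ → H →L[ℂ] H)
    (hV0 : V 0 = 1)
    (hVD' : ∀ t, t ∈ Set.Icc (0:ℝ) 1 → ∀ φ : D', V t (φ : H) ∈ D')
    -- the Schrödinger equation `iε (d/dt)(V(t)φ) = G(t)(V(t)φ) + ε K0(t) V(t) φ`
    (hVeq : ∀ φ : D', ∀ t, ∀ ht : t ∈ Set.Icc (0:ℝ) 1,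
      ∃ w : H, HasDerivWithinAt (fun s => V s (φ : H)) w (Set.Icc (0:ℝ) 1) t ∧
        (Complex.I * (ε : ℂ)) • w
          = G t ⟨V t (φ : H), hVD' t ht φ⟩ + (ε : ℂ) • K0 t (V t (φ : H))) :
    ∀ t ∈ Set.Icc (0:ℝ) 1, V t ∘L P0 0 = P0 t ∘L V t := by
  obtain ⟨MP, hMP⟩ := isCompact_Icc.exists_forall_opNorm_le fun x t ht =>
    (hP0deriv x t ht).continuousWithinAt
  obtain ⟨MP', hMP'⟩ := isCompact_Icc.exists_forall_opNorm_le hP0'cont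
  have hK0' : ∀ t, K0 t = Complex.I • ⁅P0' t, P0 t⁆ := fun t => by
    rw [hK0, Ring.lie_def]; rfl
  have hK0_le : ∀ t ∈ Icc (0:ℝ) 1, ‖K0 t‖ ≤ 2 * MP' * MP := fun t ht => by
    rw [hK0', norm_smul, Complex.norm_I, one_mul]
    have hMP'_nonneg := (norm_nonneg _).trans (hMP' t ht)
    exact (norm_lie_le _ _).trans (by gcongr; exacts [hMP' t ht, hMP t ht])
  have hK0_lie : ∀ t ∈ Icc (0:ℝ) 1, ⁅K0 t, P0 t⁆ = Complex.I • P0' t := fun t ht => by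
    have hleib := eq_mul_add_mul_of_hasDerivWithinAt_of_isIdempotentElem
      (uniqueDiffOn_Icc_zero_one t ht) ht hP0idem hMP (hP0deriv · t ht)
    rw [hK0', Ring.lie_def, smul_mul_assoc, mul_smul_comm, ← smul_sub, ← Ring.lie_def,
      IsIdempotentElem.lie_lie_of_eq_mul_add_mul (hP0idem t ht) hleib]
  have hV : ∀ φ : D', Schrodinger.IsSolution ε G K0 (Icc 0 1) (fun t => V t φ) := fun φ t ht => by
    obtain ⟨w, hw, hweq⟩ := hVeq φ t ht
    exact ⟨w, hw, hVD' t ht φ, hweq⟩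
  have hVP : ∀ φ : D', ∀ t ∈ Icc (0:ℝ) 1, V t (P0 0 φ) = P0 t (V t φ) := fun φ => by
    have h := ((hV ⟨P0 0 φ, hP0D' 0 ⟨le_rfl, zero_le_one⟩ φ⟩).sub
      ((hV φ).clm_apply hP0deriv hMP hP0D' hGcomm hK0_lie)).eq_zero hε.ne'
      (fun t ht => .self_of_isSelfAdjoint hD' (hGsa t ht)) hK0_le
      (by simp [hV0])
    simpa [sub_eq_zero] using h
  intro t ht
  exact ContinuousLinearMap.ext_on (by rwa [Submodule.span_eq]) fun x hx => hVP ⟨x, hx⟩ t ht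

theorem intertwining_property
    {H : Type*} [NormedAddCommGroup H] [InnerProductSpace ℂ H] [CompleteSpace H]
    [TopologicalSpace.SeparableSpace H]
    (ε : ℝ) (hε : 0 < ε)
    (P0 P0' : ℝ → H →L[ℂ] H)
    (hP0idem : ∀ t ∈ Set.Icc (0:ℝ) 1, P0 t ∘L P0 t = P0 t)
    (hP0deriv : ∀ x : H, ∀ t ∈ Set.Icc (0:ℝ) 1,
      HasDerivWithinAt (fun s => P0 s x) (P0' t x) (Set.Icc (0:ℝ) 1) t)
    (hP0'cont : ∀ x : H, ContinuousOn (fun t => P0' t x) (Set.Icc (0:ℝ) 1))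
    (K0 : ℝ → H →L[ℂ] H)
    (hK0 : ∀ t, K0 t = Complex.I • (P0' t ∘L P0 t - P0 t ∘L P0' t))
    (D' : Submodule ℂ H) (hD' : Dense (D' : Set H))
    (G : ℝ → D' →ₗ[ℂ] H)
    (hGsa : ∀ t ∈ Set.Icc (0:ℝ) 1, IsSelfAdjoint (LinearPMap.mk D' (G t)))
    (hP0D' : ∀ t, t ∈ Set.Icc (0:ℝ) 1 → ∀ φ : D', P0 t (φ : H) ∈ D')
    (hGcomm : ∀ t, ∀ ht : t ∈ Set.Icc (0:ℝ) 1, ∀ φ : D',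
      G t ⟨P0 t (φ : H), hP0D' t ht φ⟩ = P0 t (G t φ))
    (V Vinv : ℝ → H →L[ℂ] H)
    -- `V(t)` unitary with inverse `Vinv(t)`
    (hVunit : ∀ t ∈ Set.Icc (0:ℝ) 1,
      V t ∘L Vinv t = 1 ∧ Vinv t ∘L V t = 1 ∧ ∀ x : H, ‖V t x‖ = ‖x‖)
    (hV0 : V 0 = 1)
    (hVD' : ∀ t, t ∈ Set.Icc (0:ℝ) 1 → ∀ φ : D', V t (φ : H) ∈ D')
    (hVinvD' : ∀ t, t ∈ Set.Icc (0:ℝ) 1 → ∀ φ : D', Vinv t (φ : H) ∈ D')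
    -- the Schrödinger equation `iε (d/dt)(V(t)φ) = G(t)(V(t)φ) + ε K0(t) V(t) φ`
    (hVeq : ∀ φ : D', ∀ t, ∀ ht : t ∈ Set.Icc (0:ℝ) 1,
      ∃ w : H, HasDerivWithinAt (fun s => V s (φ : H)) w (Set.Icc (0:ℝ) 1) t ∧
        (Complex.I * (ε : ℂ)) • w
          = G t ⟨V t (φ : H), hVD' t ht φ⟩ + (ε : ℂ) • K0 t (V t (φ : H))) :
    ∀ t ∈ Set.Icc (0:ℝ) 1, V t ∘L P0 0 = P0 t ∘L V t :=
  intertwining_property_general ε hε P0 P0' hP0idem hP0deriv hP0'cont K0 hK0 D' hD' G hGsa hP0D'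
    hGcomm V hV0 hVD' hVeq
end

section
/- Let A be a self-adjoint operator on H with dense domain D(A), let P ∈ B(H) be a self-adjoint projection with Ran P ⊆ D(A), set Q := I − P, let T ∈ B(H) be the bounded operator x ↦ A(Px), and let A^a := Q∘T + T*∘Q ∈ B(H). Then A − A^a commutes with P on D(A): for every φ ∈ D(A), A(Pφ) − A^a(Pφ) = P(Aφ) − P(A^aφ). -/
open scoped ComplexInnerProductSpace


/-!
STATEMENT 14: Let `A` be a self-adjoint operator on `H` with dense domain
`D(A)`, let `P ∈ B(H)` be a self-adjoint projection with `Ran P ⊆ D(A)`, set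
`Q := I − P`, let `T ∈ B(H)` be the bounded operator `x ↦ A(Px)`, and let
`A^a := Q∘T + T*∘Q ∈ B(H)`.  Then `A − A^a` commutes with `P` on `D(A)`: for
every `φ ∈ D(A)`, `A(Pφ) − A^a(Pφ) = P(Aφ) − P(A^aφ)`.
-/

theorem diagonal_part_commutes_with_projection
    {H : Type*} [NormedAddCommGroup H] [InnerProductSpace ℂ H] [CompleteSpace H]
    [TopologicalSpace.SeparableSpace H]
    (A : H →ₗ.[ℂ] H) (hA : IsSelfAdjoint A)
    (P : H →L[ℂ] H) (hPidem : P ∘L P = P) (hPsa : IsSelfAdjoint P)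
    (hRanP : ∀ x : H, P x ∈ A.domain)
    (T : H →L[ℂ] H) (hT : ∀ x : H, T x = A ⟨P x, hRanP x⟩)
    (Q : H →L[ℂ] H) (hQ : Q = 1 - P)
    (Aa : H →L[ℂ] H) (hAa : Aa = Q ∘L T + (ContinuousLinearMap.adjoint T) ∘L Q) :
    ∀ φ : A.domain, A ⟨P (φ : H), hRanP (φ : H)⟩ - Aa (P (φ : H))
      = P (A φ) - P (Aa (φ : H)) := by
  have hA' : A.IsFormalAdjoint A := by
    have h := A.adjoint_isFormalAdjoint hA.dense_domain
    rwa [LinearPMap.isSelfAdjoint_def.mp hA] at h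
  intro φ
  have hPP : ∀ x : H, P (P x) = P x := fun x => by
    rw [← ContinuousLinearMap.comp_apply, hPidem]
  have hQP : ∀ x : H, Q (P x) = 0 := fun x => by
    simp [hQ, hPP x]
  have hPQ : ∀ x : H, P (Q x) = 0 := fun x => by
    simp [hQ, hPP x]
  have hTP : ∀ x : H, T (P x) = T x := fun x => by
    rw [hT, hT]
    exact congrArg A (Subtype.ext (hPP x))
  have hPsa' : ∀ x y : H, (⟪x, P y⟫) = (⟪P x, y⟫) := fun x y => by
    conv_lhs => rw [← hPsa.adjoint_eq]
    rw [ContinuousLinearMap.adjoint_inner_right]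
  have hqmem : (φ : H) - P (φ : H) ∈ A.domain :=
    A.domain.sub_mem φ.2 (hRanP (φ : H))
  have key : P ((ContinuousLinearMap.adjoint T) ((φ : H) - P (φ : H)))
      = P (A φ) - P (T (φ : H)) := by
    apply ext_inner_left ℂ
    intro x
    rw [hPsa', ContinuousLinearMap.adjoint_inner_right, hTP, hT]
    have hsub : (⟨(φ : H) - P (φ : H), hqmem⟩ : A.domain)
        = φ - ⟨P (φ : H), hRanP (φ : H)⟩ := rfl
    calc (⟪(A ⟨P x, hRanP x⟩ : H), (φ : H) - P (φ : H)⟫)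
        = (⟪(P x : H), (A ⟨(φ : H) - P (φ : H), hqmem⟩ : H)⟫) :=
          hA' ⟨P x, hRanP x⟩ ⟨(φ : H) - P (φ : H), hqmem⟩
      _ = (⟪P x, A φ - A ⟨P (φ : H), hRanP (φ : H)⟩⟫) := by
          rw [hsub, A.map_sub]
      _ = (⟪x, P (A φ) - P (T (φ : H))⟫) := by
          rw [← hPsa', map_sub, hT]
  have hAφ : (A ⟨P (φ : H), hRanP (φ : H)⟩ : H) = T (φ : H) := (hT (φ : H)).symm
  have hQapp : ∀ x : H, Q x = x - P x := fun x => by simp [hQ]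
  rw [hAa]
  simp only [ContinuousLinearMap.add_apply, ContinuousLinearMap.comp_apply]
  rw [hQP, map_zero, add_zero, hTP, hAφ, hQapp (T (φ : H)), hQapp (φ : H)]
  rw [map_add, map_sub, hPP (T (φ : H)), sub_self, zero_add, key]
  abel
end

section
/- Let H1(t) be a strongly continuous family of bounded self-adjoint operators on H, let U(t) be unitary operators with U(0) = I such that for every x ∈ H the map t ↦ U(t)x is C¹ with i(d/dt)(U(t)x) = H1(t)U(t)x, and let P(t) be a strongly C¹ family of bounded projections. Set P̃(t) := U(t)⁻¹P(t)U(t). Then the family P̃(t) is strongly C¹ and for every t: [P̃'(t), P̃(t)] = U(t)⁻¹([P'(t), P(t)] + i[[H1(t), P(t)], P(t)])U(t). -/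
/-!
STATEMENT 18: Let `H1(t)` be a strongly continuous family of bounded
self-adjoint operators on `H`, let `U(t)` be unitary operators with `U(0) = I`
such that for every `x ∈ H` the map `t ↦ U(t)x` is C¹ with
`i(d/dt)(U(t)x) = H1(t)U(t)x`, and let `P(t)` be a strongly C¹ family of
bounded projections.  Set `P̃(t) := U(t)⁻¹P(t)U(t)`.  Then the family `P̃(t)`
is strongly C¹ and for every `t`:
`[P̃'(t), P̃(t)] = U(t)⁻¹([P'(t), P(t)] + i[[H1(t), P(t)], P(t)])U(t)`.
-/

/-!
Products of strongly differentiable operator families obey the product rule as soon as the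
factors are locally uniformly bounded; on the compact interval this bound comes from
Banach–Steinhaus, and for `U⁻¹` from unitarity. Writing
`U(s)⁻¹ - U(t)⁻¹ = U(s)⁻¹(U(t) - U(s))U(t)⁻¹` shows that `U⁻¹` is strongly differentiable
with derivative `i U⁻¹ H1`, so `P̃' = U⁻¹ (P' + i [H1, P]) U`.
Conjugation by `U` commutes with taking commutators.
-/

open Asymptotics Filter Topology

section StronglyContinuousFamily

variable {𝕜 𝕜' : Type*} [NontriviallyNormedField 𝕜] [NontriviallyNormedField 𝕜']
  {E F : Type*} [NormedAddCommGroup E] [NormedSpace 𝕜' E]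
  [NormedAddCommGroup F] [NormedSpace 𝕜' F]

theorem IsCompact.exists_forall_norm_le_of_continuousOn_apply [CompleteSpace E]
    {α : Type*} [TopologicalSpace α] {K : Set α} (hK : IsCompact K) {B : α → E →L[𝕜'] F}
    (hB : ∀ y, ContinuousOn (fun s => B s y) K) : ∃ C, ∀ s ∈ K, ‖B s‖ ≤ C := by
  obtain ⟨C, hC⟩ := banach_steinhaus (g := fun s : K => B s) fun y => by
    obtain ⟨C, hC⟩ := hK.exists_bound_of_continuousOn (hB y)
    exact ⟨C, fun s => hC s s.2⟩
  exact ⟨C, fun s hs => hC ⟨s, hs⟩⟩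

theorem isBigO_apply_of_norm_le {α : Type*} {l : Filter α} {B : α → E →L[𝕜'] F} {C : ℝ}
    (hb : ∀ᶠ s in l, ‖B s‖ ≤ C) (g : α → E) : (fun s => B s (g s)) =O[l] g :=
  .of_bound C <| hb.mono fun s hs => (B s).le_of_opNorm_le hs (g s)

theorem Filter.Tendsto.apply_of_norm_le {α : Type*} {l : Filter α} {B : α → E →L[𝕜'] F} {C : ℝ}
    (hb : ∀ᶠ s in l, ‖B s‖ ≤ C) {y : E} {z : F} (hB : Tendsto (fun s => B s y) l (𝓝 z))
    {g : α → E} (hg : Tendsto g l (𝓝 y)) : Tendsto (fun s => B s (g s)) l (𝓝 z) := by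
  have hsmall : Tendsto (fun s => B s (g s - y)) l (𝓝 0) :=
    (isBigO_apply_of_norm_le hb _).trans_tendsto (tendsto_sub_nhds_zero_iff.2 hg)
  simpa [map_sub] using hsmall.add hB

theorem ContinuousOn.apply_of_norm_le {α : Type*} [TopologicalSpace α] {I : Set α}
    {B : α → E →L[𝕜'] F} {C : ℝ} (hb : ∀ s ∈ I, ‖B s‖ ≤ C)
    (hB : ∀ y, ContinuousOn (fun s => B s y) I) {g : α → E} (hg : ContinuousOn g I) :
    ContinuousOn (fun s => B s (g s)) I := fun t ht =>
  Tendsto.apply_of_norm_le (eventually_nhdsWithin_of_forall hb) (hB _ t ht) (hg t ht)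

theorem ContinuousLinearMap.opNorm_le_one_of_isometry_comp_eq_one {U : E →L[𝕜'] F}
    {V : F →L[𝕜'] E} (hU : ∀ x, ‖U x‖ = ‖x‖) (hUV : U ∘L V = 1) : ‖V‖ ≤ 1 :=
  opNorm_le_bound _ zero_le_one fun y => by rw [one_mul, ← hU, ← comp_apply, hUV, one_apply_eq_self]

theorem ContinuousLinearMap.inv_apply_eq_add_of_comp_eq_one {U U' : E →L[𝕜'] F} {V V' : F →L[𝕜'] E}
    (hUV : U ∘L V = 1) (hVU' : V' ∘L U' = 1) (y : F) :
    V' y = V y + V' (U (V y) - U' (V y)) := by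
  have hU : U (V y) = y := congr($hUV y)
  have hV' : V' (U' (V y)) = V y := congr($hVU' (V y))
  rw [map_sub, hU, hV', add_sub_cancel]

theorem ContinuousWithinAt.inverse_apply {α : Type*} [TopologicalSpace α] {I : Set α} {t : α}
    {U : α → E →L[𝕜'] F} {V : α → F →L[𝕜'] E} {C : ℝ} (hUV : U t ∘L V t = 1)
    (hVU : ∀ s ∈ I, V s ∘L U s = 1) (hb : ∀ s ∈ I, ‖V s‖ ≤ C) {y : F}
    (hU : ContinuousWithinAt (fun s => U s (V t y)) I t) :
    ContinuousWithinAt (fun s => V s y) I t := by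
  have hsmall : Tendsto (fun s => V s (U t (V t y) - U s (V t y))) (𝓝[I] t) (𝓝 0) :=
    (isBigO_apply_of_norm_le (eventually_nhdsWithin_of_forall hb) _).trans_tendsto
      (by simpa using (hU.const_sub (U t (V t y))))
  refine (add_zero (V t y) ▸ hsmall.const_add (V t y)).congr' ?_
  filter_upwards [self_mem_nhdsWithin] with s hs
  exact (ContinuousLinearMap.inv_apply_eq_add_of_comp_eq_one hUV (hVU s hs) y).symm

variable [NormedAlgebra 𝕜 𝕜'] [NormedSpace 𝕜 E] [IsScalarTower 𝕜 𝕜' E]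
  [NormedSpace 𝕜 F] [IsScalarTower 𝕜 𝕜' F]

theorem HasDerivWithinAt.apply_of_norm_le_of_eq_zero {I : Set 𝕜} {t : 𝕜}
    {B : 𝕜 → E →L[𝕜'] F} {C : ℝ} (hb : ∀ s ∈ I, ‖B s‖ ≤ C) {g : 𝕜 → E} {v : E}
    (hg : HasDerivWithinAt g v I t) (hg0 : g t = 0)
    (hB : ContinuousWithinAt (fun s => B s v) I t) :
    HasDerivWithinAt (fun s => B s (g s)) (B t v) I t := by
  rw [hasDerivWithinAt_iff_isLittleO] at hg ⊢
  have hsplit : (fun s => B s (g s) - B t (g t) - (s - t) • B t v)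
      = fun s => B s (g s - (s - t) • v) + (s - t) • (B s v - B t v) := by
    funext s
    simp [hg0, map_sub, ContinuousLinearMap.map_smul_of_tower, smul_sub]
  rw [hsplit]
  refine .add ?_ ?_
  · simp only [hg0, sub_zero] at hg
    exact (isBigO_apply_of_norm_le (eventually_nhdsWithin_of_forall hb) _).trans_isLittleO hg
  · have hcont : (fun s => B s v - B t v) =o[𝓝[I] t] fun _ => (1 : 𝕜) :=
      (isLittleO_one_iff 𝕜).2 (by simpa using hB.sub_const (B t v))
    simpa using (isBigO_refl (fun s => s - t) (𝓝[I] t)).smul_isLittleO hcont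

theorem HasDerivWithinAt.apply_of_norm_le {I : Set 𝕜} {t : 𝕜}
    {B : 𝕜 → E →L[𝕜'] F} {D : E → F} {C : ℝ} (hb : ∀ s ∈ I, ‖B s‖ ≤ C)
    (hB : ∀ y, HasDerivWithinAt (fun s => B s y) (D y) I t) {g : 𝕜 → E} {v : E}
    (hg : HasDerivWithinAt g v I t) :
    HasDerivWithinAt (fun s => B s (g s)) (D (g t) + B t v) I t := by
  have hmoving : HasDerivWithinAt (fun s => B s (g s - g t)) (B t v) I t :=
    (hg.sub_const (g t)).apply_of_norm_le_of_eq_zero hb (sub_self _) (hB v).continuousWithinAt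
  simpa only [map_sub, add_sub_cancel] using (hB (g t)).fun_add hmoving

theorem HasDerivWithinAt.inverse_apply {I : Set 𝕜} {t : 𝕜}
    {U : 𝕜 → E →L[𝕜'] F} {V : 𝕜 → F →L[𝕜'] E} {D : E → F} {C : ℝ} (hUV : U t ∘L V t = 1)
    (hVU : ∀ s ∈ I, V s ∘L U s = 1) (hb : ∀ s ∈ I, ‖V s‖ ≤ C)
    (hV : ∀ y, ContinuousWithinAt (fun s => V s y) I t)
    (hU : ∀ x, HasDerivWithinAt (fun s => U s x) (D x) I t) (y : F) :
    HasDerivWithinAt (fun s => V s y) (-V t (D (V t y))) I t := by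
  have hmoving : HasDerivWithinAt (fun s => V s (U t (V t y) - U s (V t y)))
      (V t (-D (V t y))) I t :=
    HasDerivWithinAt.apply_of_norm_le_of_eq_zero hb (by simpa using (hU (V t y)).const_sub _)
      (sub_self _) (hV _)
  refine (map_neg (V t) _ ▸ hmoving.const_add (V t y)).congr
    (fun s hs => ContinuousLinearMap.inv_apply_eq_add_of_comp_eq_one hUV (hVU s hs) y) ?_
  simp

theorem HasDerivWithinAt.inverse_apply_of_forall_mem {I : Set 𝕜} {U : 𝕜 → E →L[𝕜'] F}
    {V : 𝕜 → F →L[𝕜'] E} {D : 𝕜 → E → F} {C : ℝ} (hUV : ∀ s ∈ I, U s ∘L V s = 1)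
    (hVU : ∀ s ∈ I, V s ∘L U s = 1) (hb : ∀ s ∈ I, ‖V s‖ ≤ C)
    (hU : ∀ x, ∀ s ∈ I, HasDerivWithinAt (fun s => U s x) (D s x) I s) (y : F) {t : 𝕜}
    (ht : t ∈ I) : HasDerivWithinAt (fun s => V s y) (-V t (D t (V t y))) I t :=
  inverse_apply (hUV t ht) hVU hb
    (fun _ => .inverse_apply (hUV t ht) hVU hb (hU _ t ht).continuousWithinAt)
    (fun x => hU x t ht) y

end StronglyContinuousFamily

theorem conj_commutator_of_mul_eq_one {R : Type*} [Ring R] {u v : R} (h : u * v = 1) (a b : R) :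
    v * a * u * (v * b * u) - v * b * u * (v * a * u) = v * (a * b - b * a) * u := by
  have hcancel : ∀ x, u * (v * x) = x := fun x => by rw [← mul_assoc, h, one_mul]
  simp only [mul_assoc, hcancel, mul_sub, sub_mul]

theorem interaction_picture_projection_commutator_general
    {H : Type*} [NormedAddCommGroup H] [InnerProductSpace ℂ H] [CompleteSpace H]
    (H1 : ℝ → H →L[ℂ] H)
    (hH1cont : ∀ x : H, ContinuousOn (fun t => H1 t x) (Set.Icc (0:ℝ) 1))
    (U Uinv : ℝ → H →L[ℂ] H)
    (hUunit : ∀ t ∈ Set.Icc (0:ℝ) 1,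
      U t ∘L Uinv t = 1 ∧ Uinv t ∘L U t = 1 ∧ ∀ x : H, ‖U t x‖ = ‖x‖)
    -- `i (d/dt)(U(t)x) = H1(t) U(t) x`, i.e. `(d/dt)(U(t)x) = -i H1(t) U(t) x`
    (hUeq : ∀ x : H, ∀ t ∈ Set.Icc (0:ℝ) 1,
      HasDerivWithinAt (fun s => U s x)
        ((-Complex.I) • H1 t (U t x)) (Set.Icc (0:ℝ) 1) t)
    (P P' : ℝ → H →L[ℂ] H)
    (hPderiv : ∀ x : H, ∀ t ∈ Set.Icc (0:ℝ) 1,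
      HasDerivWithinAt (fun s => P s x) (P' t x) (Set.Icc (0:ℝ) 1) t)
    (hP'cont : ∀ x : H, ContinuousOn (fun t => P' t x) (Set.Icc (0:ℝ) 1))
    (Ptilde : ℝ → H →L[ℂ] H)
    (hPtilde : ∀ t, Ptilde t = Uinv t ∘L P t ∘L U t) :
    ∃ Ptilde' : ℝ → H →L[ℂ] H,
      -- `P̃` is strongly C¹ with strong derivative `P̃'`
      (∀ x : H, ∀ t ∈ Set.Icc (0:ℝ) 1,
        HasDerivWithinAt (fun s => Ptilde s x) (Ptilde' t x) (Set.Icc (0:ℝ) 1) t) ∧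
      (∀ x : H, ContinuousOn (fun t => Ptilde' t x) (Set.Icc (0:ℝ) 1)) ∧
      -- the commutator identity
      (∀ t ∈ Set.Icc (0:ℝ) 1,
        Ptilde' t ∘L Ptilde t - Ptilde t ∘L Ptilde' t
          = Uinv t ∘L
              ((P' t ∘L P t - P t ∘L P' t) +
                Complex.I • ((H1 t ∘L P t - P t ∘L H1 t) ∘L P t
                  - P t ∘L (H1 t ∘L P t - P t ∘L H1 t))) ∘L U t) := by
  set I := Set.Icc (0:ℝ) 1
  have hUinv_norm : ∀ s ∈ I, ‖Uinv s‖ ≤ 1 := fun s hs =>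
    ContinuousLinearMap.opNorm_le_one_of_isometry_comp_eq_one (hUunit s hs).2.2 (hUunit s hs).1
  have hUinv_deriv : ∀ y, ∀ t ∈ I,
      HasDerivWithinAt (fun s => Uinv s y) (Complex.I • Uinv t (H1 t y)) I t := fun y t ht => by
    simpa [(hUunit t ht).1, ← ContinuousLinearMap.comp_apply] using
      HasDerivWithinAt.inverse_apply_of_forall_mem (fun s hs => (hUunit s hs).1)
        (fun s hs => (hUunit s hs).2.1) hUinv_norm hUeq y ht
  have hUinv_cont : ∀ y, ContinuousOn (fun s => Uinv s y) I := fun y t ht =>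
    (hUinv_deriv y t ht).continuousWithinAt
  have hPcont : ∀ x, ContinuousOn (fun s => P s x) I := fun x t ht =>
    (hPderiv x t ht).continuousWithinAt
  obtain ⟨CP, hCP⟩ := isCompact_Icc.exists_forall_norm_le_of_continuousOn_apply hPcont
  obtain ⟨CH, hCH⟩ := isCompact_Icc.exists_forall_norm_le_of_continuousOn_apply hH1cont
  obtain ⟨CP', hCP'⟩ := isCompact_Icc.exists_forall_norm_le_of_continuousOn_apply hP'cont
  refine ⟨fun t => Uinv t ∘L (P' t + Complex.I • (H1 t ∘L P t - P t ∘L H1 t)) ∘L U t,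
    fun x t ht => ?_, fun x => ?_, fun t ht => ?_⟩
  · have h := HasDerivWithinAt.apply_of_norm_le hUinv_norm (fun y => hUinv_deriv y t ht)
      (HasDerivWithinAt.apply_of_norm_le hCP (fun y => hPderiv y t ht) (hUeq x t ht))
    simp only [hPtilde, ContinuousLinearMap.comp_apply]
    convert h using 1
    simp only [ContinuousLinearMap.comp_apply, add_apply, smul_apply, sub_apply, map_add, map_sub,
      map_smul]
    module
  · have hUx : ContinuousOn (fun s => U s x) I := fun t ht => (hUeq x t ht).continuousWithinAt
    have hP {w : ℝ → H} (hw : ContinuousOn w I) := ContinuousOn.apply_of_norm_le hCP hPcont hw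
    have hH {w : ℝ → H} (hw : ContinuousOn w I) := ContinuousOn.apply_of_norm_le hCH hH1cont hw
    simp only [ContinuousLinearMap.comp_apply, add_apply, smul_apply, sub_apply]
    exact ContinuousOn.apply_of_norm_le hUinv_norm hUinv_cont <|
      (ContinuousOn.apply_of_norm_le hCP' hP'cont hUx).add
        (((hH (hP hUx)).sub (hP (hH hUx))).const_smul _)
  · have hUV : U t * Uinv t = 1 := (hUunit t ht).1
    have hcomm := conj_commutator_of_mul_eq_one hUV
      (P' t + Complex.I • (H1 t * P t - P t * H1 t)) (P t)
    simp only [hPtilde, ← ContinuousLinearMap.mul_def, mul_assoc] at hcomm ⊢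
    rw [hcomm]
    congr 2
    simp only [add_mul, mul_add, smul_mul_assoc, mul_smul_comm, sub_mul, mul_sub, smul_sub]
    abel

theorem interaction_picture_projection_commutator
    {H : Type*} [NormedAddCommGroup H] [InnerProductSpace ℂ H] [CompleteSpace H]
    [TopologicalSpace.SeparableSpace H]
    (H1 : ℝ → H →L[ℂ] H)
    (hH1sa : ∀ t ∈ Set.Icc (0:ℝ) 1, IsSelfAdjoint (H1 t))
    (hH1cont : ∀ x : H, ContinuousOn (fun t => H1 t x) (Set.Icc (0:ℝ) 1))
    (U Uinv : ℝ → H →L[ℂ] H)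
    (hUunit : ∀ t ∈ Set.Icc (0:ℝ) 1,
      U t ∘L Uinv t = 1 ∧ Uinv t ∘L U t = 1 ∧ ∀ x : H, ‖U t x‖ = ‖x‖)
    (hU0 : U 0 = 1)
    -- `i (d/dt)(U(t)x) = H1(t) U(t) x`, i.e. `(d/dt)(U(t)x) = -i H1(t) U(t) x`
    (hUeq : ∀ x : H, ∀ t ∈ Set.Icc (0:ℝ) 1,
      HasDerivWithinAt (fun s => U s x)
        ((-Complex.I) • H1 t (U t x)) (Set.Icc (0:ℝ) 1) t)
    (P P' : ℝ → H →L[ℂ] H)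
    (hPidem : ∀ t ∈ Set.Icc (0:ℝ) 1, P t ∘L P t = P t)
    (hPderiv : ∀ x : H, ∀ t ∈ Set.Icc (0:ℝ) 1,
      HasDerivWithinAt (fun s => P s x) (P' t x) (Set.Icc (0:ℝ) 1) t)
    (hP'cont : ∀ x : H, ContinuousOn (fun t => P' t x) (Set.Icc (0:ℝ) 1))
    (Ptilde : ℝ → H →L[ℂ] H)
    (hPtilde : ∀ t, Ptilde t = Uinv t ∘L P t ∘L U t) :
    ∃ Ptilde' : ℝ → H →L[ℂ] H,
      -- `P̃` is strongly C¹ with strong derivative `P̃'`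
      (∀ x : H, ∀ t ∈ Set.Icc (0:ℝ) 1,
        HasDerivWithinAt (fun s => Ptilde s x) (Ptilde' t x) (Set.Icc (0:ℝ) 1) t) ∧
      (∀ x : H, ContinuousOn (fun t => Ptilde' t x) (Set.Icc (0:ℝ) 1)) ∧
      -- the commutator identity
      (∀ t ∈ Set.Icc (0:ℝ) 1,
        Ptilde' t ∘L Ptilde t - Ptilde t ∘L Ptilde' t
          = Uinv t ∘L
              ((P' t ∘L P t - P t ∘L P' t) +
                Complex.I • ((H1 t ∘L P t - P t ∘L H1 t) ∘L P t
                  - P t ∘L (H1 t ∘L P t - P t ∘L H1 t))) ∘L U t) :=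
  interaction_picture_projection_commutator_general H1 hH1cont U Uinv hUunit hUeq P P' hPderiv
    hP'cont Ptilde hPtilde
end
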